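/- Let n ≥ 0 be an integer and let w = (w1,w2,w3,w4) ∈ ℤ^4 + (1/4)(1,3,1,2)ℤ be a vector with all coordinates positive satisfying: w1 + w2 + w3 + w4 - 1 - 2*w1 ≤ 1, w2 > w1, and (2n+1)*w4 ≥ 2*w1, together with the congruences w1 ≡ w3 (mod ℤ), w2 ≡ 3*w3 (mod ℤ), w4 ≡ 2*w3 (mod ℤ), 4*w ∈ ℤ^4. Suppose moreover (w3,w4) = (1/4,1/2). Then there exists an integer k with 0 ≤ k ≤ n/2 such that w = (1/4)(4k+1, 4k+3, 1, 2). -/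
import Mathlib


/-- Membership in the lattice `ℤ⁴ + (1/4)(1,3,1,2)ℤ`. -/
def InLatCAx4 (w : Fin 4 → ℚ) : Prop :=
  ∃ (v : Fin 4 → ℤ) (r : ℤ),
    w 0 = v 0 + r * 1 / 4 ∧ w 1 = v 1 + r * 3 / 4 ∧
    w 2 = v 2 + r * 1 / 4 ∧ w 3 = v 3 + r * 2 / 4

/-- Classification of weights for a `cA_{2n}x/4` singularity in the case
`(w₃,w₄) = (1/4,1/2)`: such a weight is `(1/4)(4k+1,4k+3,1,2)` with `0 ≤ k ≤ n/2`. -/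
theorem stmt_1 (n : ℕ) (w : Fin 4 → ℚ)
    (hlat : InLatCAx4 w)
    (hpos : ∀ i, 0 < w i)
    (hdisc : w 0 + w 1 + w 2 + w 3 - 1 - 2 * w 0 ≤ 1)
    (h21 : w 0 < w 1)
    (hwt : 2 * w 0 ≤ (2 * (n : ℚ) + 1) * w 3)
    (hc1 : ∃ a : ℤ, w 0 - w 2 = a)
    (hc2 : ∃ b : ℤ, w 1 - 3 * w 2 = b)
    (hc3 : ∃ c : ℤ, w 3 - 2 * w 2 = c)
    (hint : ∀ i, ∃ m : ℤ, 4 * w i = m)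
    (h34 : w 2 = 1/4 ∧ w 3 = 1/2) :
    ∃ k : ℤ, 0 ≤ k ∧ (k : ℚ) ≤ (n : ℚ) / 2 ∧
      w = ![(4 * (k : ℚ) + 1) / 4, (4 * (k : ℚ) + 3) / 4, 1 / 4, 2 / 4] := by
  obtain ⟨h2, h3⟩ := h34
  obtain ⟨a, ha⟩ := hc1
  obtain ⟨b, hb⟩ := hc2
  have hw0 : w 0 = a + 1/4 := by rw [h2] at ha; linarith
  have hw1 : w 1 = b + 3/4 := by rw [h2] at hb; linarith
  have hp0 := hpos 0
  have ha0 : (0:ℤ) ≤ a := by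
    by_contra h
    push_neg at h
    have h' : a ≤ -1 := by omega
    have : (a:ℚ) ≤ -1 := by exact_mod_cast h'
    linarith [hp0, hw0 ▸ hp0]
  have hab : a ≤ b := by
    have : (a:ℚ) < b + 1/2 := by rw [hw0, hw1] at h21; linarith
    by_contra h
    push_neg at h
    have : (b:ℚ) + 1 ≤ a := by exact_mod_cast h
    linarith
  have hba : b ≤ a := by
    have : (b:ℚ) ≤ a + 3/4 := by rw [hw0, hw1, h2, h3] at hdisc; linarith
    by_contra h
    push_neg at h
    have : (a:ℚ) + 1 ≤ b := by exact_mod_cast h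
    linarith
  have hEq : b = a := le_antisymm hba hab
  refine ⟨a, ha0, ?_, ?_⟩
  · rw [hw0, h3] at hwt; linarith
  · funext i
    fin_cases i <;> simp [hw0, hw1, h2, h3, hEq] <;> ring
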